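/- Let Σ be a quasifan with maximal cones σ₁, …, σ_r in a lattice N, let L be the maximal sublattice of N contained in ⋂_{i=1}^r σᵢ, and let P : N → Ñ := N/L denote the projection. Then the cones P^ℝ(σ₁), …, P^ℝ(σ_r) are the maximal cones of the quotient fan of Σ by L; in particular, each P^ℝ(σᵢ) is strictly convex, any two of them intersect in a common face, and together with all their faces they form a fan in Ñ. -/

import Mathlib

open Set

/-- The coercion of an integral vector in `ℤ^n` to a real vector in `ℝ^n`. -/
def toR {n : ℕ} (v : Fin n → ℤ) : Fin n → ℝ := fun i => (v i : ℝ)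

/-- The scalar extension `F^ℝ : N^ℝ → N'^ℝ` of a `ℤ`-linear map `F : N → N'`,
where `N = ℤ^n`, `N' = ℤ^m`. -/
noncomputable def extR {n m : ℕ} (F : (Fin n → ℤ) →ₗ[ℤ] (Fin m → ℤ)) :
    (Fin n → ℝ) →ₗ[ℝ] (Fin m → ℝ) :=
  (Matrix.of fun i j => ((F (Pi.single j 1)) i : ℝ)).mulVecLin

/-- A convex cone: a subset containing `0` that is closed under addition and
under multiplication by nonnegative scalars. -/
def IsCone {V : Type*} [AddCommGroup V] [Module ℝ V] (σ : Set V) : Prop :=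
  0 ∈ σ ∧ (∀ x ∈ σ, ∀ y ∈ σ, x + y ∈ σ) ∧ ∀ c : ℝ, 0 ≤ c → ∀ x ∈ σ, c • x ∈ σ

/-- The convex-cone hull of a set: the smallest convex cone containing it. -/
def coneHull {V : Type*} [AddCommGroup V] [Module ℝ V] (s : Set V) : Set V :=
  ⋂₀ {σ | IsCone σ ∧ s ⊆ σ}

/-- A rational polyhedral cone in `ℝ^n`: a convex cone generated by finitely
many vectors of the lattice `ℤ^n`. -/
def IsRatCone {n : ℕ} (σ : Set (Fin n → ℝ)) : Prop :=
  ∃ s : Finset (Fin n → ℤ), σ = coneHull (toR '' ↑s)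

/-- A cone is strictly convex if it contains no nonzero linear subspace,
equivalently `σ ∩ (-σ) = {0}`. -/
def IsStrictlyConvexCone {V : Type*} [AddCommGroup V] [Module ℝ V] (σ : Set V) : Prop :=
  ∀ x ∈ σ, -x ∈ σ → x = 0

/-- `τ` is a face of the convex cone `σ`: a subcone such that whenever
`x, y ∈ σ` and `x + y ∈ τ`, then `x, y ∈ τ`. -/
def IsFaceOf {V : Type*} [AddCommGroup V] [Module ℝ V] (τ σ : Set V) : Prop :=
  IsCone τ ∧ τ ⊆ σ ∧ ∀ x ∈ σ, ∀ y ∈ σ, x + y ∈ τ → x ∈ τ ∧ y ∈ τ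

/-- A system of `N`-cones: a finite set of rational polyhedral cones in `ℝ^n`. -/
def IsConeSystem {n : ℕ} (S : Set (Set (Fin n → ℝ))) : Prop :=
  S.Finite ∧ ∀ σ ∈ S, IsRatCone σ

/-- A quasifan: a finite set of rational polyhedral cones, closed under taking
faces, in which any two cones intersect in a common face. -/
def IsQuasifan {n : ℕ} (Δ : Set (Set (Fin n → ℝ))) : Prop :=
  IsConeSystem Δ ∧ (∀ σ ∈ Δ, ∀ τ, IsFaceOf τ σ → τ ∈ Δ) ∧
    ∀ σ ∈ Δ, ∀ σ' ∈ Δ, IsFaceOf (σ ∩ σ') σ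

/-- A fan: a quasifan all of whose cones are strictly convex. -/
def IsFan {n : ℕ} (Δ : Set (Set (Fin n → ℝ))) : Prop :=
  IsQuasifan Δ ∧ ∀ σ ∈ Δ, IsStrictlyConvexCone σ

/-- `F` defines a map of systems of cones (in particular of (quasi-)fans):
every cone of `S` is mapped by `F^ℝ` into some cone of `S'`. -/
def IsConeMap {n m : ℕ} (F : (Fin n → ℤ) →ₗ[ℤ] (Fin m → ℤ))
    (S : Set (Set (Fin n → ℝ))) (S' : Set (Set (Fin m → ℝ))) : Prop :=
  ∀ σ ∈ S, ∃ τ ∈ S', extR F '' σ ⊆ τ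

/-- A sublattice `L ⊆ ℤ^n` is primitive if the quotient `ℤ^n/L` is
torsion-free. -/
def IsPrimitive {n : ℕ} (L : Submodule ℤ (Fin n → ℤ)) : Prop :=
  ∀ (v : Fin n → ℤ) (k : ℤ), k ≠ 0 → k • v ∈ L → v ∈ L

/-- The set of maximal cones of a system of cones. -/
def maxCones {n : ℕ} (Δ : Set (Set (Fin n → ℝ))) : Set (Set (Fin n → ℝ)) :=
  {σ ∈ Δ | ∀ τ ∈ Δ, σ ⊆ τ → σ = τ}

/-- `ρ` is a ray (one-dimensional cone) of `Δ`. -/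
def IsRay {n : ℕ} (Δ : Set (Set (Fin n → ℝ))) (ρ : Set (Fin n → ℝ)) : Prop :=
  ρ ∈ Δ ∧ Module.finrank ℝ (Submodule.span ℝ ρ) = 1

/-- `Δt`, together with the surjection `P : ℤ^n → ℤ^m` onto the quotient of
`ℤ^n` by the primitive sublattice `L̂ = ker P ⊇ L`, is the quotient fan of the
system of cones `S` by `L`: the projection `P` defines a map of systems of
cones from `S` to the fan `Δt` and every map of systems of cones `F` from `S`
to a fan with `F(L) = 0` factors through `P` via a map of fans. -/
def IsQuotientFan {n m : ℕ} (S : Set (Set (Fin n → ℝ))) (L : Submodule ℤ (Fin n → ℤ))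
    (P : (Fin n → ℤ) →ₗ[ℤ] (Fin m → ℤ)) (Δt : Set (Set (Fin m → ℝ))) : Prop :=
  Function.Surjective P ∧ L ≤ LinearMap.ker P ∧ IsPrimitive (LinearMap.ker P) ∧
  IsFan Δt ∧ IsConeMap P S Δt ∧
  ∀ (k : ℕ) (F : (Fin n → ℤ) →ₗ[ℤ] (Fin k → ℤ)) (Δ' : Set (Set (Fin k → ℝ))),
    IsFan Δ' → IsConeMap F S Δ' → L ≤ LinearMap.ker F →
    ∃ Ft : (Fin m → ℤ) →ₗ[ℤ] (Fin k → ℤ), IsConeMap Ft Δt Δ' ∧ F = Ft.comp P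

section ConeLemmas

variable {V W : Type*} [AddCommGroup V] [Module ℝ V] [AddCommGroup W] [Module ℝ W]

lemma isCone_coneHull (s : Set V) : IsCone (coneHull s) := by
  refine ⟨fun σ hσ => hσ.1.1, fun x hx y hy σ hσ => hσ.1.2.1 x (hx σ hσ) y (hy σ hσ),
    fun c hc x hx σ hσ => hσ.1.2.2 c hc x (hx σ hσ)⟩

lemma subset_coneHull (s : Set V) : s ⊆ coneHull s :=
  fun x hx σ hσ => hσ.2 hx

lemma coneHull_min {s σ : Set V} (h : IsCone σ) (hs : s ⊆ σ) : coneHull s ⊆ σ :=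
  fun x hx => hx σ ⟨h, hs⟩

lemma isCone_image (G : V →ₗ[ℝ] W) {σ : Set V} (h : IsCone σ) : IsCone (G '' σ) := by
  refine ⟨⟨0, h.1, G.map_zero⟩, ?_, ?_⟩
  · rintro _ ⟨x, hx, rfl⟩ _ ⟨y, hy, rfl⟩
    exact ⟨x + y, h.2.1 x hx y hy, G.map_add x y⟩
  · rintro c hc _ ⟨x, hx, rfl⟩
    exact ⟨c • x, h.2.2 c hc x hx, G.map_smul c x⟩

lemma image_coneHull (G : V →ₗ[ℝ] W) (s : Set V) :
    G '' coneHull s = coneHull (G '' s) := by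
  apply Set.Subset.antisymm
  · have : coneHull s ⊆ G ⁻¹' coneHull (G '' s) := by
      apply coneHull_min
      · have hc := isCone_coneHull (G '' s)
        refine ⟨?_, ?_, ?_⟩
        · simpa [G.map_zero] using hc.1
        · intro x hx y hy
          simpa [G.map_add] using hc.2.1 _ hx _ hy
        · intro c hcc x hx
          simpa [G.map_smul] using hc.2.2 c hcc _ hx
      · intro x hx
        exact subset_coneHull _ ⟨x, hx, rfl⟩
    exact Set.image_subset_iff.mpr this
  · exact coneHull_min (isCone_image G (isCone_coneHull s)) (Set.image_mono (subset_coneHull s))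

lemma sum_mem_coneHull {t t' : Finset V} (hsub : (↑t' : Set V) ⊆ (↑t : Set V))
    (c : V → ℝ) (hc : ∀ v, 0 ≤ c v) :
    (∑ v ∈ t', c v • v) ∈ coneHull (↑t : Set V) := by
  have hhull := isCone_coneHull (↑t : Set V)
  refine Finset.sum_induction _ (· ∈ coneHull (↑t : Set V))
    (fun a b ha hb => hhull.2.1 a ha b hb) hhull.1 ?_
  intro v hv
  exact hhull.2.2 (c v) (hc v) v (subset_coneHull _ (hsub hv))

lemma mem_coneHull_finset {t : Finset V} {x : V} :
    x ∈ coneHull (↑t : Set V) ↔ ∃ c : V → ℝ, (∀ v, 0 ≤ c v) ∧ x = ∑ v ∈ t, c v • v := by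
  constructor
  · intro hx
    have hcone : IsCone {x : V | ∃ c : V → ℝ, (∀ v, 0 ≤ c v) ∧ x = ∑ v ∈ t, c v • v} := by
      refine ⟨⟨0, fun v => le_refl 0, by simp⟩, ?_, ?_⟩
      · rintro a ⟨c, hc, rfl⟩ b ⟨d, hd, rfl⟩
        exact ⟨c + d, fun v => add_nonneg (hc v) (hd v), by
          simp [add_smul, Finset.sum_add_distrib]⟩
      · rintro e he a ⟨c, hc, rfl⟩
        exact ⟨e • c, fun v => mul_nonneg he (hc v), by
          simp [Finset.smul_sum, smul_smul]⟩
    have hsub : (↑t : Set V) ⊆ {x : V | ∃ c : V → ℝ, (∀ v, 0 ≤ c v) ∧ x = ∑ v ∈ t, c v • v} := by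
      intro v hv
      classical
      refine ⟨fun w => if w = v then 1 else 0, fun w => by positivity, ?_⟩
      have : ∑ w ∈ t, (fun w => if w = v then (1:ℝ) else 0) w • w
          = ∑ w ∈ t, (if w = v then (1:ℝ) • w else 0) := by
        refine Finset.sum_congr rfl fun w _ => ?_
        by_cases hw : w = v <;> simp [hw]
      rw [this, Finset.sum_ite_eq' t v (fun w => (1:ℝ) • w)]
      simp [Finset.mem_coe.mp hv]
    exact hx _ ⟨hcone, hsub⟩
  · rintro ⟨c, hc, rfl⟩
    exact sum_mem_coneHull subset_rfl c hc

lemma isFaceOf_refl {σ : Set V} (h : IsCone σ) : IsFaceOf σ σ :=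
  ⟨h, subset_rfl, fun x hx y hy _ => ⟨hx, hy⟩⟩

lemma isFaceOf_trans {α β σ : Set V} (hαβ : IsFaceOf α β) (hβσ : IsFaceOf β σ) :
    IsFaceOf α σ := by
  refine ⟨hαβ.1, hαβ.2.1.trans hβσ.2.1, fun x hx y hy hxy => ?_⟩
  have hb := hβσ.2.2 x hx y hy (hαβ.2.1 hxy)
  exact hαβ.2.2 x hb.1 y hb.2 hxy

lemma isCone_inter {σ τ : Set V} (hσ : IsCone σ) (hτ : IsCone τ) : IsCone (σ ∩ τ) :=
  ⟨⟨hσ.1, hτ.1⟩, fun x hx y hy => ⟨hσ.2.1 x hx.1 y hy.1, hτ.2.1 x hx.2 y hy.2⟩,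
    fun c hc x hx => ⟨hσ.2.2 c hc x hx.1, hτ.2.2 c hc x hx.2⟩⟩

lemma isFaceOf_inter {τ₁ τ₂ σ : Set V} (h₁ : IsFaceOf τ₁ σ) (h₂ : IsFaceOf τ₂ σ) :
    IsFaceOf (τ₁ ∩ τ₂) σ := by
  refine ⟨isCone_inter h₁.1 h₂.1, fun x hx => h₁.2.1 hx.1, fun x hx y hy hxy => ?_⟩
  have a := h₁.2.2 x hx y hy hxy.1
  have b := h₂.2.2 x hx y hy hxy.2
  exact ⟨⟨a.1, b.1⟩, ⟨a.2, b.2⟩⟩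

lemma isFaceOf_of_subset {α ρ σ : Set V} (hα : IsFaceOf α σ) (hρ : IsFaceOf ρ σ)
    (hsub : α ⊆ ρ) : IsFaceOf α ρ :=
  ⟨hα.1, hsub, fun x hx y hy hxy => hα.2.2 x (hρ.2.1 hx) y (hρ.2.1 hy) hxy⟩

lemma mem_face_of_neg {τ σ : Set V} (h : IsFaceOf τ σ) {x : V} (hx : x ∈ σ)
    (hnx : -x ∈ σ) : x ∈ τ := by
  have := h.2.2 x hx (-x) hnx (by simpa using h.1.1)
  exact this.1

lemma face_eq_coneHull_inter {t : Finset V} {τ : Set V}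
    (h : IsFaceOf τ (coneHull (↑t : Set V))) : τ = coneHull ((↑t : Set V) ∩ τ) := by
  apply Set.Subset.antisymm
  · intro x hx
    obtain ⟨c, hc, hxe⟩ := mem_coneHull_finset.mp (h.2.1 hx)
    classical
    suffices H : ∀ t' : Finset V, t' ⊆ t → (∑ v ∈ t', c v • v) ∈ τ →
        (∑ v ∈ t', c v • v) ∈ coneHull ((↑t : Set V) ∩ τ) by
      rw [hxe] at hx ⊢
      exact H t subset_rfl hx
    intro t'
    induction t' using Finset.induction with
    | empty => intro _ _; simpa using (isCone_coneHull _).1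
    | @insert a t'' hnotmem ih =>
      intro hsub hmem
      rw [Finset.sum_insert hnotmem] at hmem ⊢
      have hat : a ∈ t := hsub (Finset.mem_insert_self a t'')
      have hsub' : t'' ⊆ t := fun v hv => hsub (Finset.mem_insert_of_mem hv)
      have h1 : (c a • a) ∈ coneHull (↑t : Set V) :=
        (isCone_coneHull _).2.2 _ (hc a) _ (subset_coneHull _ hat)
      have h2 : (∑ v ∈ t'', c v • v) ∈ coneHull (↑t : Set V) :=
        sum_mem_coneHull (by exact_mod_cast Finset.coe_subset.mpr hsub') c hc
      have hface := h.2.2 _ h1 _ h2 hmem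
      have hA : (c a • a) ∈ coneHull ((↑t : Set V) ∩ τ) := by
        rcases eq_or_lt_of_le (hc a) with hz | hpos
        · rw [← hz, zero_smul]; exact (isCone_coneHull _).1
        · have ha' : a ∈ τ := by
            have : (c a)⁻¹ • (c a • a) ∈ τ := h.1.2.2 _ (inv_nonneg.mpr (hc a)) _ hface.1
            rwa [smul_smul, inv_mul_cancel₀ (ne_of_gt hpos), one_smul] at this
          exact (isCone_coneHull _).2.2 _ (hc a) _ (subset_coneHull _ ⟨hat, ha'⟩)
      exact (isCone_coneHull _).2.1 _ hA _ (ih hsub' hface.2)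
  · exact coneHull_min h.1 (fun x hx => hx.2)

end ConeLemmas
section ConeLemmas2

variable {V W : Type*} [AddCommGroup V] [Module ℝ V] [AddCommGroup W] [Module ℝ W]

lemma faces_finite (t : Finset V) : {τ : Set V | IsFaceOf τ (coneHull (↑t : Set V))}.Finite := by
  classical
  have : {τ : Set V | IsFaceOf τ (coneHull (↑t : Set V))} ⊆
      (fun u : Finset V => coneHull (↑u : Set V)) '' ↑t.powerset := by
    intro τ hτ
    refine ⟨t.filter (· ∈ τ),
      Finset.mem_coe.mpr (Finset.mem_powerset.mpr (Finset.filter_subset _ t)), ?_⟩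
    have hset : ((t.filter (· ∈ τ) : Finset V) : Set V) = (↑t : Set V) ∩ τ := by
      ext v; simp [Finset.mem_filter]
    show coneHull ((t.filter (· ∈ τ) : Finset V) : Set V) = τ
    rw [hset, ← face_eq_coneHull_inter hτ]
  exact Set.Finite.subset (Set.Finite.image _ (t.powerset.finite_toSet)) this

/-- Intersection of faces of two cones meeting in a common face. -/
lemma isFaceOf_inter_of_commonFace {σ σ' τ τ' : Set V}
    (hτ : IsFaceOf τ σ) (hτ' : IsFaceOf τ' σ')
    (hρ : IsFaceOf (σ ∩ σ') σ) (hρ' : IsFaceOf (σ ∩ σ') σ') :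
    IsFaceOf (τ ∩ τ') τ := by
  set ρ := σ ∩ σ' with hρdef
  have hA : IsFaceOf (τ ∩ ρ) σ := isFaceOf_inter hτ hρ
  have hAρ : IsFaceOf (τ ∩ ρ) ρ := isFaceOf_of_subset hA hρ (fun x hx => hx.2)
  have hAτ : IsFaceOf (τ ∩ ρ) τ := isFaceOf_of_subset hA hτ (fun x hx => hx.1)
  have hB : IsFaceOf (τ' ∩ ρ) σ' := isFaceOf_inter hτ' hρ'
  have hBρ : IsFaceOf (τ' ∩ ρ) ρ := isFaceOf_of_subset hB hρ' (fun x hx => hx.2)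
  have hAB : IsFaceOf ((τ ∩ ρ) ∩ (τ' ∩ ρ)) ρ := isFaceOf_inter hAρ hBρ
  have hABA : IsFaceOf ((τ ∩ ρ) ∩ (τ' ∩ ρ)) (τ ∩ ρ) :=
    isFaceOf_of_subset hAB hAρ (fun x hx => hx.1)
  have heq : (τ ∩ ρ) ∩ (τ' ∩ ρ) = τ ∩ τ' := by
    ext x
    constructor
    · rintro ⟨⟨h1, _⟩, ⟨h2, _⟩⟩; exact ⟨h1, h2⟩
    · rintro ⟨h1, h2⟩
      exact ⟨⟨h1, hτ.2.1 h1, hτ'.2.1 h2⟩, ⟨h2, hτ.2.1 h1, hτ'.2.1 h2⟩⟩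
  rw [← heq]
  exact isFaceOf_trans hABA hAτ

end ConeLemmas2

section ExtR

lemma toR_zero {n : ℕ} : toR (0 : Fin n → ℤ) = 0 := by
  funext i; simp [toR]

lemma toR_add {n : ℕ} (a b : Fin n → ℤ) : toR (a + b) = toR a + toR b := by
  funext i; simp [toR]

lemma toR_neg {n : ℕ} (a : Fin n → ℤ) : toR (-a) = -toR a := by
  funext i; simp [toR]

lemma extR_apply {n m : ℕ} (F : (Fin n → ℤ) →ₗ[ℤ] (Fin m → ℤ)) (x : Fin n → ℝ) :
    extR F x = ∑ j, x j • toR (F (Pi.single j 1)) := by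
  funext i
  simp only [extR, Matrix.mulVecLin_apply, Matrix.mulVec, dotProduct, Matrix.of_apply]
  rw [Finset.sum_apply]
  refine Finset.sum_congr rfl fun j _ => ?_
  simp [toR, mul_comm]

lemma extR_toR {n m : ℕ} (F : (Fin n → ℤ) →ₗ[ℤ] (Fin m → ℤ)) (v : Fin n → ℤ) :
    extR F (toR v) = toR (F v) := by
  have hv : v = ∑ j, v j • Pi.single j 1 := by
    funext i
    rw [Finset.sum_apply]
    simp [Pi.single_apply, Finset.sum_ite_eq' Finset.univ i]
  funext i
  rw [extR_apply, Finset.sum_apply]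
  have h2 : F v i = ∑ j, v j * (F (Pi.single j 1)) i := by
    conv_lhs => rw [hv]
    rw [map_sum, Finset.sum_apply]
    refine Finset.sum_congr rfl fun j _ => ?_
    rw [F.map_smul]
    simp
  have h1 : toR (F v) i = ((F v : Fin m → ℤ) i : ℝ) := rfl
  rw [h1, h2]
  push_cast
  refine Finset.sum_congr rfl fun j _ => ?_
  simp [toR]

lemma extR_comp_apply {n m k : ℕ} (G : (Fin m → ℤ) →ₗ[ℤ] (Fin k → ℤ))
    (F : (Fin n → ℤ) →ₗ[ℤ] (Fin m → ℤ)) (x : Fin n → ℝ) :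
    extR (G.comp F) x = extR G (extR F x) := by
  rw [extR_apply F x, map_sum, extR_apply (G.comp F) x]
  refine Finset.sum_congr rfl fun j _ => ?_
  rw [map_smul, extR_toR]
  rfl

end ExtR
section MoreExtR

lemma toR_sub {n : ℕ} (a b : Fin n → ℤ) : toR (a - b) = toR a - toR b := by
  funext i; simp [toR]

lemma extR_id_apply {n : ℕ} (x : Fin n → ℝ) : extR (LinearMap.id) x = x := by
  funext i
  rw [extR_apply, Finset.sum_apply]
  have : ∀ j, (x j • toR ((LinearMap.id : (Fin n → ℤ) →ₗ[ℤ] (Fin n → ℤ)) (Pi.single j 1))) i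
      = x j * (if j = i then 1 else 0) := by
    intro j
    simp [toR, Pi.single_apply, eq_comm]
  simp only [this]
  simp [Finset.sum_ite_eq' Finset.univ i]

lemma extR_sub_apply {n m : ℕ} (F G : (Fin n → ℤ) →ₗ[ℤ] (Fin m → ℤ)) (x : Fin n → ℝ) :
    extR (F - G) x = extR F x - extR G x := by
  rw [extR_apply, extR_apply, extR_apply, ← Finset.sum_sub_distrib]
  refine Finset.sum_congr rfl fun j _ => ?_
  rw [LinearMap.sub_apply, toR_sub, smul_sub]

lemma exists_section {n m : ℕ} (P : (Fin n → ℤ) →ₗ[ℤ] (Fin m → ℤ))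
    (h : Function.Surjective P) :
    ∃ q : (Fin m → ℤ) →ₗ[ℤ] (Fin n → ℤ), ∀ v, P (q v) = v := by
  classical
  choose g hg using h
  refine ⟨(Pi.basisFun ℤ (Fin m)).constr ℤ (fun j => g (Pi.single j 1)), fun v => ?_⟩
  have hcomp : P.comp ((Pi.basisFun ℤ (Fin m)).constr ℤ (fun j => g (Pi.single j 1)))
      = LinearMap.id := by
    apply (Pi.basisFun ℤ (Fin m)).ext
    intro j
    rw [LinearMap.comp_apply, Module.Basis.constr_basis, hg, LinearMap.id_apply, Pi.basisFun_apply]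
  have := LinearMap.congr_fun hcomp v
  simpa using this

end MoreExtR
/-- Let `Sig` be a quasifan with maximal cones `σ 1, …, σ r`
in a lattice `N`, let `L` be the maximal sublattice of `N` contained in
`⋂ᵢ σᵢ` (i.e. `v ∈ L ↔ v ∈ ⋂ᵢ σᵢ` and `-v ∈ ⋂ᵢ σᵢ`), and let `P : N → Ñ := N/L`
denote the projection (a surjection with kernel `L`). Then the cones
`P^ℝ(σ 1), …, P^ℝ(σ r)` are the maximal cones of the quotient fan of `Sig` by
`L`; in particular each `P^ℝ(σᵢ)` is strictly convex, any two of them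
intersect in a common face, and together with all their faces they form a fan
in `Ñ`. -/
theorem quasifan_projection_quotient {n m r : ℕ}
    (Sig : Set (Set (Fin n → ℝ))) (hSig : IsQuasifan Sig)
    (σ : Fin r → Set (Fin n → ℝ)) (hmax : Set.range σ = maxCones Sig)
    (L : Submodule ℤ (Fin n → ℤ))
    (hL : ∀ v : Fin n → ℤ, v ∈ L ↔ ((toR v ∈ ⋂ i, σ i) ∧ (-toR v ∈ ⋂ i, σ i)))
    (P : (Fin n → ℤ) →ₗ[ℤ] (Fin m → ℤ)) (hPsurj : Function.Surjective P)
    (hPker : LinearMap.ker P = L) :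
    (∀ i, IsStrictlyConvexCone (extR P '' σ i)) ∧
    (∀ i j, IsFaceOf (extR P '' σ i ∩ extR P '' σ j) (extR P '' σ i)) ∧
    IsFan {τ | ∃ i, IsFaceOf τ (extR P '' σ i)} ∧
    maxCones {τ | ∃ i, IsFaceOf τ (extR P '' σ i)} = Set.range (fun i => extR P '' σ i) ∧
    IsQuotientFan Sig L P {τ | ∃ i, IsFaceOf τ (extR P '' σ i)} := by
  classical
  obtain ⟨⟨hfin, hrat⟩, hfaceclosed, hcommon⟩ := hSig
  have hσmc : ∀ i, σ i ∈ maxCones Sig := fun i => hmax ▸ Set.mem_range_self i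
  have hσSig : ∀ i, σ i ∈ Sig := fun i => (hσmc i).1
  have hσmax : ∀ i, ∀ τ ∈ Sig, σ i ⊆ τ → σ i = τ := fun i => (hσmc i).2
  choose s hs using fun i => hrat (σ i) (hσSig i)
  have hconeσ : ∀ i, IsCone (σ i) := fun i => by rw [hs i]; exact isCone_coneHull _
  have hfaceij : ∀ i j, IsFaceOf (σ i ∩ σ j) (σ i) :=
    fun i j => hcommon _ (hσSig i) _ (hσSig j)
  obtain ⟨q, hq⟩ := exists_section P hPsurj
  -- key1 : lineality of each maximal cone lies in the kernel of extR P
  have key1 : ∀ i (x : Fin n → ℝ), x ∈ σ i → -x ∈ σ i → extR P x = 0 := by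
    intro i x hx hnx
    set Wi : Set (Fin n → ℝ) := σ i ∩ {y | -y ∈ σ i} with hWidef
    have hWface : IsFaceOf Wi (σ i) := by
      refine ⟨⟨⟨(hconeσ i).1, by simpa using (hconeσ i).1⟩, ?_, ?_⟩, fun a ha => ha.1, ?_⟩
      · rintro a ⟨ha, ha'⟩ b ⟨hb, hb'⟩
        refine ⟨(hconeσ i).2.1 a ha b hb, ?_⟩
        have h := (hconeσ i).2.1 _ ha' _ hb'
        have heq : -a + -b = -(a + b) := by abel
        rwa [heq] at h
      · rintro c hc a ⟨ha, ha'⟩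
        refine ⟨(hconeσ i).2.2 c hc a ha, ?_⟩
        have h := (hconeσ i).2.2 c hc _ ha'
        have heq : c • -a = -(c • a) := smul_neg c a
        rwa [heq] at h
      · rintro a ha b hb ⟨hab, hab'⟩
        have hna : -a ∈ σ i := by
          have : b + -(a + b) ∈ σ i := (hconeσ i).2.1 b hb _ hab'
          have heq : b + -(a + b) = -a := by abel
          rwa [heq] at this
        have hnb : -b ∈ σ i := by
          have : a + -(a + b) ∈ σ i := (hconeσ i).2.1 a ha _ hab'
          have heq : a + -(a + b) = -b := by abel
          rwa [heq] at this
        exact ⟨⟨ha, hna⟩, ⟨hb, hnb⟩⟩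
    set t : Finset (Fin n → ℝ) := (s i).image toR with htdef
    have hσhull : σ i = coneHull (↑t : Set (Fin n → ℝ)) := by
      rw [hs i, htdef, Finset.coe_image]
    have hWface' : IsFaceOf Wi (coneHull (↑t : Set (Fin n → ℝ))) := hσhull ▸ hWface
    have hWker : Wi ⊆ {y : Fin n → ℝ | extR P y = 0} := by
      rw [face_eq_coneHull_inter hWface']
      apply coneHull_min
      · refine ⟨by simp, ?_, ?_⟩
        · intro a ha b hb; simp only [Set.mem_setOf_eq] at *; rw [map_add, ha, hb, add_zero]
        · intro c _ a ha; simp only [Set.mem_setOf_eq] at *; rw [map_smul, ha, smul_zero]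
      · rintro z ⟨hzt, hzW⟩
        obtain ⟨v, hvs, rfl⟩ := Finset.mem_image.mp (Finset.mem_coe.mp hzt)
        have hvL : v ∈ L := by
          rw [hL]
          constructor
          · refine Set.mem_iInter.mpr fun j => ?_
            exact (mem_face_of_neg (hfaceij i j) hzW.1 hzW.2).2
          · refine Set.mem_iInter.mpr fun j => ?_
            have : -toR v ∈ σ i ∩ σ j :=
              mem_face_of_neg (hfaceij i j) hzW.2 (by simpa using hzW.1)
            exact this.2
        have hPv : P v = 0 := by rw [← LinearMap.mem_ker, hPker]; exact hvL
        show extR P (toR v) = 0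
        rw [extR_toR, hPv, toR_zero]
    exact hWker ⟨hx, hnx⟩
  -- key2 : the kernel of extR P lies in every maximal cone (and its negative)
  have key2 : ∀ x : Fin n → ℝ, extR P x = 0 → ∀ i, x ∈ σ i ∧ -x ∈ σ i := by
    intro x hx
    have hspan : x ∈ Submodule.span ℝ (toR '' (L : Set (Fin n → ℤ))) := by
      have hπ : ∀ u : Fin n → ℤ,
          ((LinearMap.id : (Fin n → ℤ) →ₗ[ℤ] (Fin n → ℤ)) - q.comp P) u ∈ L := by
        intro u
        rw [← hPker, LinearMap.mem_ker]
        simp [LinearMap.sub_apply, hq]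
      have hxeq : x = extR ((LinearMap.id : (Fin n → ℤ) →ₗ[ℤ] (Fin n → ℤ)) - q.comp P) x := by
        rw [extR_sub_apply, extR_id_apply, extR_comp_apply, hx, map_zero, sub_zero]
      rw [hxeq, extR_apply]
      refine Submodule.sum_mem _ fun j _ => ?_
      exact Submodule.smul_mem _ _ (Submodule.subset_span ⟨_, hπ (Pi.single j 1), rfl⟩)
    clear hx
    intro i
    induction hspan using Submodule.span_induction with
    | mem y hy =>
      obtain ⟨v, hvL, rfl⟩ := hy
      obtain ⟨h1, h2⟩ := (hL v).mp hvL
      exact ⟨Set.mem_iInter.mp h1 i, Set.mem_iInter.mp h2 i⟩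
    | zero => exact ⟨(hconeσ i).1, by simpa using (hconeσ i).1⟩
    | add y z _ _ hy hz =>
      refine ⟨(hconeσ i).2.1 y hy.1 z hz.1, ?_⟩
      have h := (hconeσ i).2.1 _ hy.2 _ hz.2
      have heq : -y + -z = -(y + z) := by abel
      rwa [heq] at h
    | smul c y _ hy =>
      rcases le_or_gt 0 c with hc | hc
      · refine ⟨(hconeσ i).2.2 c hc y hy.1, ?_⟩
        have h := (hconeσ i).2.2 c hc _ hy.2
        have heq : c • -y = -(c • y) := smul_neg c y
        rwa [heq] at h
      · have h1 : c • y = (-c) • (-y) := by rw [smul_neg, neg_smul, neg_neg]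
        have h2 : -(c • y) = (-c) • y := by rw [neg_smul]
        refine ⟨?_, ?_⟩
        · rw [h1]; exact (hconeσ i).2.2 (-c) (by linarith) _ hy.2
        · rw [h2]; exact (hconeσ i).2.2 (-c) (by linarith) _ hy.1
  have hconeP : ∀ i, IsCone (extR P '' σ i) := fun i => isCone_image _ (hconeσ i)
  -- strict convexity
  have goal1 : ∀ i, IsStrictlyConvexCone (extR P '' σ i) := by
    rintro i w ⟨x, hx, rfl⟩ hnw
    obtain ⟨y, hy, hyw⟩ := hnw
    have hxy : extR P (x + y) = 0 := by rw [map_add, hyw, add_neg_cancel]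
    have hnxy := (key2 _ hxy i).2
    have hnx : -x ∈ σ i := by
      have : y + -(x + y) ∈ σ i := (hconeσ i).2.1 y hy _ hnxy
      have heq : y + -(x + y) = -x := by abel
      rwa [heq] at this
    exact key1 i x hx hnx
  -- images of containments descend
  have hsub : ∀ i j, extR P '' σ i ⊆ extR P '' σ j → σ i ⊆ σ j := by
    intro i j hij x hx
    obtain ⟨y, hy, hyx⟩ := hij ⟨x, hx, rfl⟩
    have hd : extR P (x - y) = 0 := by rw [map_sub, hyx, sub_self]
    have : x - y ∈ σ j := (key2 _ hd j).1
    have := (hconeσ j).2.1 y hy _ this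
    have heq : y + (x - y) = x := by abel
    rwa [heq] at this
  -- image of a face is a face of the image
  have himface : ∀ i τ, IsFaceOf τ (σ i) →
      IsFaceOf (extR P '' τ) (extR P '' σ i) := by
    intro i τ hτ
    refine ⟨isCone_image _ hτ.1, Set.image_mono hτ.2.1, ?_⟩
    rintro _ ⟨x, hx, rfl⟩ _ ⟨y, hy, rfl⟩ hab
    obtain ⟨z, hz, hzeq⟩ := hab
    have hd : extR P (x + y - z) = 0 := by
      rw [map_sub, map_add, hzeq, sub_self]
    have hdτ : x + y - z ∈ τ := mem_face_of_neg hτ (key2 _ hd i).1 (key2 _ hd i).2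
    have hxyτ : x + y ∈ τ := by
      have := hτ.1.2.1 z hz _ hdτ
      have heq : z + (x + y - z) = x + y := by abel
      rwa [heq] at this
    obtain ⟨h1, h2⟩ := hτ.2.2 x hx y hy hxyτ
    exact ⟨⟨x, h1, rfl⟩, ⟨y, h2, rfl⟩⟩
  -- images intersect in the image of the intersection
  have hinter : ∀ i j, extR P '' σ i ∩ extR P '' σ j = extR P '' (σ i ∩ σ j) := by
    intro i j
    apply Set.Subset.antisymm
    · rintro w ⟨⟨x, hx, rfl⟩, ⟨y, hy, hyw⟩⟩
      have hd : extR P (x - y) = 0 := by rw [map_sub, hyw, sub_self]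
      have hxj : x ∈ σ j := by
        have := (hconeσ j).2.1 y hy _ (key2 _ hd j).1
        have heq : y + (x - y) = x := by abel
        rwa [heq] at this
      exact ⟨x, ⟨hx, hxj⟩, rfl⟩
    · rintro _ ⟨x, ⟨hx1, hx2⟩, rfl⟩
      exact ⟨⟨x, hx1, rfl⟩, ⟨x, hx2, rfl⟩⟩
  have goal2 : ∀ i j, IsFaceOf (extR P '' σ i ∩ extR P '' σ j) (extR P '' σ i) := by
    intro i j
    rw [hinter]
    exact himface i _ (hfaceij i j)
  -- the projected cones as cone hulls of finsets
  set t : Fin r → Finset (Fin m → ℝ) := fun i => ((s i).image P).image toR with htdef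
  have hPhull : ∀ i, extR P '' σ i = coneHull (↑(t i) : Set (Fin m → ℝ)) := by
    intro i
    have hsets : extR P '' (toR '' ↑(s i)) = (↑(t i) : Set (Fin m → ℝ)) := by
      rw [htdef]
      simp only [Finset.coe_image, Set.image_image]
      ext z
      constructor
      · rintro ⟨v, hv, rfl⟩; exact ⟨v, hv, (extR_toR P v).symm⟩
      · rintro ⟨v, hv, rfl⟩; exact ⟨v, hv, extR_toR P v⟩
    rw [hs i, image_coneHull, hsets]
  set Δt : Set (Set (Fin m → ℝ)) := {τ | ∃ i, IsFaceOf τ (extR P '' σ i)} with hΔtdef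
  -- Δt is a fan
  have hΔfin : Δt.Finite := by
    have hsubU : Δt ⊆ ⋃ i, {τ | IsFaceOf τ (coneHull (↑(t i) : Set (Fin m → ℝ)))} := by
      rintro τ ⟨i, hτ⟩
      exact Set.mem_iUnion.mpr ⟨i, by rwa [← hPhull i]⟩
    exact Set.Finite.subset (Set.finite_iUnion fun i => faces_finite (t i)) hsubU
  have hΔrat : ∀ τ ∈ Δt, IsRatCone τ := by
    rintro τ ⟨i, hτ⟩
    rw [hPhull i] at hτ
    refine ⟨((s i).image P).filter (fun v => toR v ∈ τ), ?_⟩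
    have himg : toR '' ↑(((s i).image P).filter (fun v => toR v ∈ τ))
        = (↑(t i) : Set (Fin m → ℝ)) ∩ τ := by
      ext z
      constructor
      · rintro ⟨v, hv, rfl⟩
        obtain ⟨hv1, hv2⟩ := Finset.mem_filter.mp (Finset.mem_coe.mp hv)
        exact ⟨by rw [htdef]; exact Finset.mem_coe.mpr (Finset.mem_image_of_mem toR hv1), hv2⟩
      · rintro ⟨hz1, hz2⟩
        rw [htdef] at hz1
        obtain ⟨v, hv, rfl⟩ := Finset.mem_image.mp (Finset.mem_coe.mp hz1)
        exact ⟨v, Finset.mem_coe.mpr (Finset.mem_filter.mpr ⟨hv, hz2⟩), rfl⟩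
    rw [himg, ← face_eq_coneHull_inter hτ]
  have hΔfaces : ∀ δ ∈ Δt, ∀ τ, IsFaceOf τ δ → τ ∈ Δt := by
    rintro δ ⟨i, hδ⟩ τ hτ
    exact ⟨i, isFaceOf_trans hτ hδ⟩
  have hΔcommon : ∀ δ ∈ Δt, ∀ δ' ∈ Δt, IsFaceOf (δ ∩ δ') δ := by
    rintro δ ⟨i, hδ⟩ δ' ⟨j, hδ'⟩
    refine isFaceOf_inter_of_commonFace hδ hδ' (goal2 i j) ?_
    rw [Set.inter_comm]
    exact goal2 j i
  have hΔsc : ∀ δ ∈ Δt, IsStrictlyConvexCone δ := by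
    rintro δ ⟨i, hδ⟩ x hx hnx
    exact goal1 i x (hδ.2.1 hx) (hδ.2.1 hnx)
  have hΔfan : IsFan Δt := ⟨⟨⟨hΔfin, hΔrat⟩, hΔfaces, hΔcommon⟩, hΔsc⟩
  -- maximal cones of Δt
  have hmemΔ : ∀ i, extR P '' σ i ∈ Δt := fun i => ⟨i, isFaceOf_refl (hconeP i)⟩
  have goal4 : maxCones Δt = Set.range (fun i => extR P '' σ i) := by
    ext τ
    constructor
    · rintro ⟨⟨i, hτ⟩, hmx⟩
      exact ⟨i, (hmx _ (hmemΔ i) hτ.2.1).symm⟩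
    · rintro ⟨i, rfl⟩
      refine ⟨hmemΔ i, ?_⟩
      rintro τ' ⟨j, hτ'⟩ hsubP
      have h1 : extR P '' σ i ⊆ extR P '' σ j := hsubP.trans hτ'.2.1
      have h2 : σ i = σ j := hσmax i (σ j) (hσSig j) (hsub i j h1)
      have h3 : τ' ⊆ extR P '' σ i := by rw [h2]; exact hτ'.2.1
      exact Set.Subset.antisymm hsubP h3
  -- covering by maximal cones
  have hcover : ∀ δ ∈ Sig, ∃ i, δ ⊆ σ i := by
    intro δ hδ
    obtain ⟨a, ⟨haS, hδa⟩, hmaxa⟩ := Set.Finite.exists_maximalFor id {τ ∈ Sig | δ ⊆ τ}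
      (hfin.subset (fun τ hτ => hτ.1)) ⟨δ, hδ, subset_rfl⟩
    have hamc : a ∈ maxCones Sig :=
      ⟨haS, fun τ hτ hsuba => Set.Subset.antisymm hsuba (hmaxa ⟨hτ, hδa.trans hsuba⟩ hsuba)⟩
    rw [← hmax] at hamc
    obtain ⟨i, rfl⟩ := hamc
    exact ⟨i, hδa⟩
  -- quotient fan
  have goal5 : IsQuotientFan Sig L P Δt := by
    refine ⟨hPsurj, le_of_eq hPker.symm, ?_, hΔfan, ?_, ?_⟩
    · intro v k hk hkv
      rw [LinearMap.mem_ker] at hkv ⊢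
      rw [map_smul] at hkv
      exact (smul_eq_zero.mp hkv).resolve_left hk
    · intro δ hδ
      obtain ⟨i, hδi⟩ := hcover δ hδ
      exact ⟨extR P '' σ i, hmemΔ i, Set.image_mono hδi⟩
    · intro k F Δ' hΔ' hF hLF
      have hFeq : F = (F.comp q).comp P := by
        apply LinearMap.ext
        intro v
        have hker : v - q (P v) ∈ L := by
          rw [← hPker, LinearMap.mem_ker, map_sub, hq, sub_self]
        have hF0 : F (v - q (P v)) = 0 := hLF hker
        rw [map_sub, sub_eq_zero] at hF0
        simpa using hF0
      refine ⟨F.comp q, ?_, hFeq⟩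
      rintro τ ⟨i, hτi⟩
      obtain ⟨δ', hδ', hsub'⟩ := hF (σ i) (hσSig i)
      refine ⟨δ', hδ', ?_⟩
      rintro _ ⟨w, hw, rfl⟩
      obtain ⟨x, hx, rfl⟩ := hτi.2.1 hw
      rw [← extR_comp_apply, ← hFeq]
      exact hsub' ⟨x, hx, rfl⟩
  exact ⟨goal1, goal2, hΔfan, goal4, goal5⟩
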